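/- Let K be a field and D = K[x]. Then R(D) is a discrete valuation ring with maximal ideal generated by 1/x; in fact R(D) = K[x⁻¹] localized at the prime ideal (x⁻¹). -/

import Mathlib

noncomputable def recip (D : Type*) [CommRing D] [IsDomain D] : Subring (FractionRing D) :=
  Subring.closure {x | ∃ d : D, d ≠ 0 ∧ x = (algebraMap D (FractionRing D) d)⁻¹}

/-!
Put `t = 1/x`. The evaluation `K[T] → K(x)`, `T ↦ t`, is injective, so it extends to an
embedding of the localization `K[T]_(T)` into `K(x)`, and its image is exactly `R(K[x])`:
* a generator `1/f(x)` of `R(K[x])`, with `n = deg f`, equals `tⁿ / f*(t)` where `f* = Tⁿ f(1/T)`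
  is the reversed polynomial, whose constant term is the leading coefficient of `f`;
* conversely `1/q(t) = xⁿ / q*(x)` with `deg q* = n` when `q(0) ≠ 0`, and `xⁿ / g ∈ R(K[x])`
  whenever `n ≤ deg g`, by induction on `n`.
As a localization of the PID `K[T]` at the nonzero prime `(T)`, `K[T]_(T)` is a discrete
valuation ring whose maximal ideal is generated by `T`, which is sent to `t`.
-/

open Polynomial

theorem Subring.mem_closure_range_algebraMap_union_singleton {R A : Type*} [CommRing R]
    [CommRing A] [Algebra R A] {x z : A} :
    z ∈ Subring.closure (Set.range (algebraMap R A) ∪ {x}) ↔ ∃ p : R[X], aeval x p = z := by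
  rw [← Algebra.adjoin_eq_ring_closure, Subalgebra.mem_toSubring,
    Algebra.adjoin_singleton_eq_range_aeval, AlgHom.mem_range]

theorem inv_mem_recip {D : Type*} [CommRing D] [IsDomain D] {d : D} (hd : d ≠ 0) :
    (algebraMap D (FractionRing D) d)⁻¹ ∈ recip D :=
  Subring.subset_closure ⟨d, hd, rfl⟩

instance Polynomial.isPrime_span_X {R : Type*} [CommRing R] [IsDomain R] :
    (Ideal.span {(X : R[X])}).IsPrime :=
  (Ideal.span_singleton_prime X_ne_zero).2 prime_X

theorem Polynomial.mem_primeCompl_span_X_iff {R : Type*} [CommRing R] [IsDomain R] {q : R[X]} :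
    q ∈ (Ideal.span {(X : R[X])}).primeCompl ↔ q.coeff 0 ≠ 0 := by
  rw [Ideal.mem_primeCompl_iff, Ideal.mem_span_singleton, X_dvd_iff]

namespace RecipPolynomial

variable {K : Type*} [Field K]

variable (K) in
noncomputable def xinv : FractionRing K[X] := (algebraMap K[X] (FractionRing K[X]) X)⁻¹

theorem transcendental_xinv : Transcendental K (xinv K) := by
  have hX : Transcendental K (algebraMap K[X] (FractionRing K[X]) X) :=
    (transcendental_algebraMap_iff (IsFractionRing.injective _ _)).2 (transcendental_X K)
  exact fun h => hX (by simpa [xinv] using h.inv)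

theorem aeval_xinv_injective : Function.Injective (aeval (R := K) (xinv K)) :=
  transcendental_iff_injective.1 transcendental_xinv

theorem aeval_xinv_ne_zero_of_mem_primeCompl {q : K[X]}
    (hq : q ∈ (Ideal.span {(X : K[X])}).primeCompl) : aeval (xinv K) q ≠ 0 :=
  (map_ne_zero_iff _ aeval_xinv_injective).2 fun h => hq (h ▸ zero_mem _)

theorem algebraMap_mem_recip (a : K) : algebraMap K (FractionRing K[X]) a ∈ recip K[X] := by
  rcases eq_or_ne a 0 with rfl | ha
  · simp
  · convert inv_mem_recip (C_ne_zero.2 (inv_ne_zero ha))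
    rw [← algebraMap_eq, ← IsScalarTower.algebraMap_apply, map_inv₀, inv_inv]

theorem xinv_mem_recip : xinv K ∈ recip K[X] := inv_mem_recip X_ne_zero

theorem aeval_xinv_mem_recip (p : K[X]) : aeval (xinv K) p ∈ recip K[X] := by
  refine Subring.closure_le.2 ?_ (Subring.mem_closure_range_algebraMap_union_singleton.2 ⟨p, rfl⟩)
  rintro _ (⟨a, rfl⟩ | rfl)
  exacts [algebraMap_mem_recip a, xinv_mem_recip]

theorem X_pow_div_mem_recip {n : ℕ} {f : K[X]} (hf : f ≠ 0) (hn : n ≤ f.natDegree) :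
    algebraMap K[X] (FractionRing K[X]) X ^ n / algebraMap K[X] _ f ∈ recip K[X] := by
  induction n generalizing f with
  | zero => simpa using inv_mem_recip hf
  | succ n ih =>
    have hq : f.divX ≠ 0 := fun h => by
      rw [divX_eq_zero_iff] at h
      rw [h, natDegree_C] at hn
      omega
    have hqn : n ≤ f.divX.natDegree := by rw [natDegree_divX_eq_natDegree_tsub_one]; omega
    have hsplit := congrArg (algebraMap K[X] (FractionRing K[X])) (divX_mul_X_add f)
    rw [map_add, map_mul, ← algebraMap_eq, ← IsScalarTower.algebraMap_apply] at hsplit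
    -- with `f = x q + c`: `x^(n+1) / f = (x^n / q) * (x q / f) = (x^n / q) * (1 - c / f)`
    have key : algebraMap K[X] (FractionRing K[X]) X ^ (n + 1) / algebraMap K[X] _ f =
        algebraMap K[X] (FractionRing K[X]) X ^ n / algebraMap K[X] _ f.divX *
          (1 - algebraMap K (FractionRing K[X]) (f.coeff 0) * (algebraMap K[X] _ f)⁻¹) := by
      have : algebraMap K[X] (FractionRing K[X]) f ≠ 0 := by simp [hf]
      have : algebraMap K[X] (FractionRing K[X]) f.divX ≠ 0 := by simp [hq]
      field_simp
      linear_combination (algebraMap K[X] (FractionRing K[X]) X ^ n) * hsplit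
    rw [key]
    exact mul_mem (ih hq hqn)
      (sub_mem (one_mem _) (mul_mem (algebraMap_mem_recip _) (inv_mem_recip hf)))

theorem algebraMap_eq_aeval_xinv_reflect_mul (f : K[X]) :
    algebraMap K[X] (FractionRing K[X]) f =
      aeval (xinv K) (reflect f.natDegree f) * algebraMap K[X] _ X ^ f.natDegree := by
  have := invertibleOfNonzero (by simp : algebraMap K[X] (FractionRing K[X]) X ≠ 0)
  rw [aeval_def, xinv, ← invOf_eq_inv, eval₂_reflect_mul_pow _ _ _ _ le_rfl, ← aeval_def,
    aeval_algebraMap_apply, aeval_X_left_apply]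

theorem aeval_xinv_eq_algebraMap_reflect_mul (q : K[X]) :
    aeval (xinv K) q =
      algebraMap K[X] (FractionRing K[X]) (reflect q.natDegree q) * xinv K ^ q.natDegree := by
  have := invertibleOfNonzero (by simp [xinv] : xinv K ≠ 0)
  rw [aeval_def, ← eval₂_reflect_mul_pow _ _ _ _ le_rfl, invOf_eq_inv, xinv, inv_inv,
    ← aeval_def, aeval_algebraMap_apply, aeval_X_left_apply]

theorem inv_aeval_xinv_mem_recip {q : K[X]} (hq : q.coeff 0 ≠ 0) :
    (aeval (xinv K) q)⁻¹ ∈ recip K[X] := by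
  have hrev : (reflect q.natDegree q).coeff q.natDegree ≠ 0 := by
    rwa [coeff_reflect, revAt_le le_rfl, Nat.sub_self]
  rw [aeval_xinv_eq_algebraMap_reflect_mul, mul_inv, xinv, inv_pow, inv_inv, mul_comm,
    ← div_eq_mul_inv]
  exact X_pow_div_mem_recip (fun h => hrev (by rw [h, coeff_zero])) (le_natDegree_of_ne_zero hrev)

variable (K) in
noncomputable def liftAevalXinv :
    Localization.AtPrime (Ideal.span {(X : K[X])}) →+* FractionRing K[X] :=
  IsLocalization.lift (M := (Ideal.span {X}).primeCompl) (g := (aeval (xinv K)).toRingHom)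
    fun q => isUnit_iff_ne_zero.2 (aeval_xinv_ne_zero_of_mem_primeCompl q.2)

theorem liftAevalXinv_mk' (p : K[X]) (q : (Ideal.span {(X : K[X])}).primeCompl) :
    liftAevalXinv K (IsLocalization.mk' _ p q) = aeval (xinv K) p / aeval (xinv K) (q : K[X]) :=
  (IsLocalization.lift_mk'_spec _ _ _ _).2
    (mul_div_cancel₀ _ (aeval_xinv_ne_zero_of_mem_primeCompl q.2)).symm

theorem liftAevalXinv_injective : Function.Injective (liftAevalXinv K) := by
  rw [liftAevalXinv, IsLocalization.lift_injective_iff]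
  intro p q
  rw [(IsLocalization.injective _
    (Ideal.primeCompl_le_nonZeroDivisors (Ideal.span {(X : K[X])}))).eq_iff]
  exact aeval_xinv_injective.eq_iff.symm

theorem range_liftAevalXinv : (liftAevalXinv K).range = recip K[X] := by
  apply le_antisymm
  · rintro _ ⟨z, rfl⟩
    obtain ⟨⟨p, q⟩, rfl⟩ := IsLocalization.mk'_surjective (Ideal.span {(X : K[X])}).primeCompl z
    rw [liftAevalXinv_mk', div_eq_mul_inv]
    exact mul_mem (aeval_xinv_mem_recip p)
      (inv_aeval_xinv_mem_recip (mem_primeCompl_span_X_iff.1 q.2))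
  · refine Subring.closure_le.2 ?_
    rintro _ ⟨f, hf, rfl⟩
    have hrev : reflect f.natDegree f ∈ (Ideal.span {(X : K[X])}).primeCompl := by
      rw [mem_primeCompl_span_X_iff, coeff_reflect, revAt_le (Nat.zero_le _), Nat.sub_zero]
      exact leadingCoeff_ne_zero.2 hf
    refine ⟨IsLocalization.mk' _ (X ^ f.natDegree) ⟨_, hrev⟩, ?_⟩
    rw [liftAevalXinv_mk', algebraMap_eq_aeval_xinv_reflect_mul, map_pow, aeval_X, mul_inv, xinv,
      inv_pow, div_eq_mul_inv, mul_comm]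

variable (K) in
noncomputable def localizationAtXEquivRecip :
    Localization.AtPrime (Ideal.span {(X : K[X])}) ≃+* recip K[X] :=
  (RingEquiv.ofBijective (liftAevalXinv K).rangeRestrict
    ⟨fun _ _ h => liftAevalXinv_injective (congrArg Subtype.val h),
      (liftAevalXinv K).rangeRestrict_surjective⟩).trans
    (RingEquiv.subringCongr range_liftAevalXinv)

theorem localizationAtXEquivRecip_algebraMap_X :
    localizationAtXEquivRecip K (algebraMap K[X] _ X) = ⟨xinv K, xinv_mem_recip⟩ :=
  Subtype.ext <| (IsLocalization.lift_eq _ _).trans (aeval_X _)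

theorem isDiscreteValuationRing_recip : IsDiscreteValuationRing (recip K[X]) :=
  have := IsLocalization.AtPrime.isDiscreteValuationRing_of_dedekind_domain K[X]
    (P := Ideal.span {X}) (by simp) (Localization.AtPrime (Ideal.span {(X : K[X])}))
  IsDiscreteValuationRing.RingEquivClass.isDiscreteValuationRing (localizationAtXEquivRecip K)

theorem isMaximal_span_xinv :
    (Ideal.span {(⟨xinv K, xinv_mem_recip⟩ : recip K[X])}).IsMaximal := by
  rw [← localizationAtXEquivRecip_algebraMap_X, ← Set.image_singleton, ← Ideal.map_span,
    ← Set.image_singleton, ← Ideal.map_span, Localization.AtPrime.map_eq_maximalIdeal]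
  exact Ideal.map_isMaximal_of_equiv _

theorem exists_aeval_xinv_eq_xinv_mul_iff {q : K[X]} :
    (∃ c ∈ Subring.closure (Set.range (algebraMap K (FractionRing K[X])) ∪ {xinv K}),
      aeval (xinv K) q = xinv K * c) ↔ X ∣ q := by
  simp only [Subring.mem_closure_range_algebraMap_union_singleton]
  constructor
  · rintro ⟨_, ⟨r, rfl⟩, h⟩
    exact ⟨r, aeval_xinv_injective (by rw [h, map_mul, aeval_X])⟩
  · rintro ⟨r, rfl⟩
    exact ⟨aeval (xinv K) r, ⟨r, rfl⟩, by rw [map_mul, aeval_X]⟩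

theorem coe_recip_eq_setOf_div :
    letI A := Subring.closure (Set.range (algebraMap K (FractionRing K[X])) ∪ {xinv K})
    (recip K[X] : Set (FractionRing K[X])) =
      {z | ∃ a b, a ∈ A ∧ b ∈ A ∧ (¬ ∃ c ∈ A, b = xinv K * c) ∧ z = a / b} := by
  ext z
  simp only [← range_liftAevalXinv, SetLike.mem_coe, RingHom.mem_range, Set.mem_ofPred_eq]
  constructor
  · rintro ⟨w, rfl⟩
    obtain ⟨⟨p, q⟩, rfl⟩ := IsLocalization.mk'_surjective (Ideal.span {(X : K[X])}).primeCompl w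
    refine ⟨_, _, Subring.mem_closure_range_algebraMap_union_singleton.2 ⟨p, rfl⟩,
      Subring.mem_closure_range_algebraMap_union_singleton.2 ⟨q, rfl⟩, ?_, liftAevalXinv_mk' p q⟩
    rw [exists_aeval_xinv_eq_xinv_mul_iff, X_dvd_iff]
    exact mem_primeCompl_span_X_iff.1 q.2
  · rintro ⟨a, b, ha, hb, hq, rfl⟩
    obtain ⟨p, rfl⟩ := Subring.mem_closure_range_algebraMap_union_singleton.1 ha
    obtain ⟨q, rfl⟩ := Subring.mem_closure_range_algebraMap_union_singleton.1 hb
    rw [exists_aeval_xinv_eq_xinv_mul_iff, X_dvd_iff] at hq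
    exact ⟨IsLocalization.mk' _ p ⟨q, mem_primeCompl_span_X_iff.2 hq⟩, liftAevalXinv_mk' _ _⟩

end RecipPolynomial

theorem stmt_4 (K : Type*) [Field K] :
    letI F := FractionRing (Polynomial K)
    letI xinv : F := (algebraMap (Polynomial K) F Polynomial.X)⁻¹
    letI A : Subring F := Subring.closure (Set.range (algebraMap K F) ∪ {xinv})
    IsDiscreteValuationRing (recip (Polynomial K)) ∧
    (Ideal.span {(⟨xinv, Subring.subset_closure ⟨Polynomial.X, Polynomial.X_ne_zero, rfl⟩⟩ :
        recip (Polynomial K))}).IsMaximal ∧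
    (recip (Polynomial K) : Set F) =
      {z | ∃ a b : F, a ∈ A ∧ b ∈ A ∧ (¬ ∃ c ∈ A, b = xinv * c) ∧ z = a / b} :=
  ⟨RecipPolynomial.isDiscreteValuationRing_recip, RecipPolynomial.isMaximal_span_xinv,
    RecipPolynomial.coe_recip_eq_setOf_div⟩
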